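/- For real numbers m and s with 0 < m + 1 and 0 < s - m - 1, the integral ∫₀^∞ (log t)² · t^m / (1+t)^s dt equals B(s - m - 1, m + 1) · [ (Ψ(m+1) - Ψ(s-m-1))² + Ψ'(m+1) + Ψ'(s-m-1) ]. -/

import Mathlib

open MeasureTheory Set

/-- The Beta function `B(a,b) = ∫₀¹ x^(a-1) (1-x)^(b-1) dx`. -/
noncomputable def Beta (a b : ℝ) : ℝ := ∫ x in Ioo (0:ℝ) 1, x ^ (a-1) * (1-x) ^ (b-1)

/-- The digamma function, the logarithmic derivative of the Gamma function. -/
noncomputable def digamma (x : ℝ) : ℝ := deriv (fun y => Real.log (Real.Gamma y)) x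

/-- The trigamma function, the derivative of the digamma function. -/
noncomputable def trigamma (x : ℝ) : ℝ := deriv digamma x

/-!
Let `M(x) = ∫₀^∞ t^(x-1) (1+t)^(-s) dt`. The substitution `u = t/(1+t)` identifies `M(x)` with
`B(x, s-x) = Γ(x) Γ(s-x) / Γ(s)` for `0 < x < s`. Each differentiation under the integral sign
brings down a factor `log t`, so the integral in question is `M''(m+1)`. On the Gamma side,
`Γ' = Γ ψ` gives `M' = M (ψ(x) - ψ(s-x))`, and differentiating once more
`M'' = M ((ψ(x) - ψ(s-x))² + ψ'(x) + ψ'(s-x))`.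
-/

open Filter Asymptotics Topology

lemma Real.analyticAt_Gamma {x : ℝ} (hx : 0 < x) : AnalyticAt ℝ Real.Gamma x := by
  have hΓ : AnalyticOnNhd ℂ Complex.Gamma {z : ℂ | 0 < z.re} := by
    refine DifferentiableOn.analyticOnNhd (fun z hz => ?_)
      (isOpen_lt continuous_const Complex.continuous_re)
    refine (Complex.differentiableAt_Gamma z fun n hn => ?_).differentiableWithinAt
    have : (0 : ℝ) < -n := by simpa [hn] using hz
    linarith [n.cast_nonneg (α := ℝ)]
  simpa only [Complex.Gamma_ofReal, Complex.ofReal_re] using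
    (hΓ x (by simpa using hx)).re_ofReal

lemma analyticAt_log_Gamma {x : ℝ} (hx : 0 < x) :
    AnalyticAt ℝ (fun y => Real.log (Real.Gamma y)) x :=
  (Real.analyticAt_Gamma hx).log (Real.Gamma_pos_of_pos hx)

lemma hasDerivAt_log_Gamma {x : ℝ} (hx : 0 < x) :
    HasDerivAt (fun y => Real.log (Real.Gamma y)) (digamma x) x :=
  (analyticAt_log_Gamma hx).differentiableAt.hasDerivAt

lemma hasDerivAt_digamma {x : ℝ} (hx : 0 < x) : HasDerivAt digamma (trigamma x) x := by
  have hψ : AnalyticOnNhd ℝ digamma (Ioi 0) :=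
    AnalyticOnNhd.deriv fun _ hy => analyticAt_log_Gamma hy
  exact (hψ x hx).differentiableAt.hasDerivAt

lemma hasDerivAt_Gamma_of_pos {x : ℝ} (hx : 0 < x) :
    HasDerivAt Real.Gamma (Real.Gamma x * digamma x) x := by
  have hexp := (hasDerivAt_log_Gamma hx).exp
  rw [Real.exp_log (Real.Gamma_pos_of_pos hx)] at hexp
  refine hexp.congr_of_eventuallyEq ?_
  filter_upwards [eventually_gt_nhds hx] with y hy
  rw [Real.exp_log (Real.Gamma_pos_of_pos hy)]

lemma Beta_eq_Gamma_mul_Gamma_div {a b : ℝ} (ha : 0 < a) (hb : 0 < b) :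
    Beta a b = Real.Gamma a * Real.Gamma b / Real.Gamma (a + b) := by
  have h : (Beta a b : ℂ) = Complex.betaIntegral a b := by
    rw [Complex.betaIntegral, intervalIntegral.integral_of_le zero_le_one,
      integral_Ioc_eq_integral_Ioo, Beta, ← integral_complex_ofReal]
    refine setIntegral_congr_fun measurableSet_Ioo fun x hx => ?_
    push_cast [Complex.ofReal_cpow hx.1.le, Complex.ofReal_cpow (sub_nonneg.2 hx.2.le)]
    rfl
  rw [Complex.betaIntegral_eq_Gamma_mul_div _ _ (by simpa) (by simpa), ← Complex.ofReal_add,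
    Complex.Gamma_ofReal, Complex.Gamma_ofReal, Complex.Gamma_ofReal] at h
  exact_mod_cast h

lemma image_div_one_add_Ioi : (fun t : ℝ => t / (1 + t)) '' Ioi 0 = Ioo 0 1 := by
  ext u
  constructor
  · rintro ⟨t, ht, rfl⟩
    have ht : (0 : ℝ) < t := ht
    exact ⟨by positivity, (div_lt_one (by positivity)).2 (by linarith)⟩
  · rintro ⟨hu0, hu1⟩
    refine ⟨u / (1 - u), div_pos hu0 (by linarith), ?_⟩
    field_simp [(by linarith : (1 : ℝ) - u ≠ 0)]
    ring

lemma injOn_div_one_add : InjOn (fun t : ℝ => t / (1 + t)) (Ioi 0) := by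
  intro t ht r hr h
  have ht : (0 : ℝ) < t := ht
  have hr : (0 : ℝ) < r := hr
  rw [div_eq_div_iff (by positivity) (by positivity)] at h
  linarith

lemma hasDerivAt_div_one_add {t : ℝ} (ht : 0 < t) :
    HasDerivAt (fun t : ℝ => t / (1 + t)) ((1 + t) ^ (-2 : ℝ)) t := by
  refine ((hasDerivAt_id t).div ((hasDerivAt_id t).const_add 1) (by positivity)).congr_deriv ?_
  rw [Real.rpow_neg (by positivity), Real.rpow_two]
  simp

lemma integral_rpow_mul_one_add_rpow_neg {a b : ℝ} :
    ∫ t in Ioi (0 : ℝ), t ^ (a - 1) * (1 + t) ^ (-(a + b)) = Beta a b := by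
  rw [Beta, ← image_div_one_add_Ioi,
    integral_image_eq_integral_abs_deriv_smul measurableSet_Ioi
      (fun t ht => (hasDerivAt_div_one_add ht).hasDerivWithinAt) injOn_div_one_add]
  refine setIntegral_congr_fun measurableSet_Ioi fun t ht => ?_
  have ht : (0 : ℝ) < t := ht
  have h1t : (0 : ℝ) < 1 + t := by positivity
  have hsub : 1 - t / (1 + t) = (1 + t)⁻¹ := by field_simp; ring
  rw [smul_eq_mul, abs_of_pos (by positivity), hsub, Real.div_rpow ht.le h1t.le,
    Real.inv_rpow h1t.le, ← Real.rpow_neg h1t.le, div_eq_mul_inv, ← Real.rpow_neg h1t.le]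
  calc t ^ (a - 1) * (1 + t) ^ (-(a + b))
      = t ^ (a - 1) * ((1 + t) ^ (-2 : ℝ) * (1 + t) ^ (-(a - 1)) * (1 + t) ^ (-(b - 1))) := by
        rw [← Real.rpow_add h1t, ← Real.rpow_add h1t]; ring_nf
    _ = _ := by ring

lemma mellin_ofReal (f : ℝ → ℝ) (x : ℝ) :
    mellin (fun t => (f t : ℂ)) x = ↑(∫ t in Ioi (0 : ℝ), t ^ (x - 1) * f t) := by
  rw [mellin, ← integral_complex_ofReal]
  refine setIntegral_congr_fun measurableSet_Ioi fun t ht => ?_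
  rw [smul_eq_mul, Complex.ofReal_mul, Complex.ofReal_cpow (le_of_lt ht)]
  push_cast
  rfl

lemma hasDerivAt_integral_rpow_mul {f : ℝ → ℝ} {a b x : ℝ} (hfc : ContinuousOn f (Ioi 0))
    (hf_top : f =O[atTop] (· ^ (-a))) (hf_bot : f =O[𝓝[>] 0] (· ^ (-b)))
    (hb : b < x) (ha : x < a) :
    HasDerivAt (fun y => ∫ t in Ioi (0 : ℝ), t ^ (y - 1) * f t)
      (∫ t in Ioi (0 : ℝ), t ^ (x - 1) * (Real.log t * f t)) x := by
  have hloc : LocallyIntegrableOn (fun t => (f t : ℂ)) (Ioi 0) :=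
    (Complex.continuous_ofReal.comp_continuousOn hfc).locallyIntegrableOn measurableSet_Ioi
  have h := (mellin_hasDerivAt_of_isBigO_rpow hloc (Complex.isBigO_ofReal_left.2 hf_top)
    (by simpa) (Complex.isBigO_ofReal_left.2 hf_bot) (by simpa)).2.real_of_complex
  simp only [Complex.real_smul, ← Complex.ofReal_mul, mellin_ofReal, Complex.ofReal_re] at h
  exact h

lemma HasDerivAt.unique_of_eqOn {f g : ℝ → ℝ} {f' g' x : ℝ} {U : Set ℝ} (hU : IsOpen U)
    (hx : x ∈ U) (hfg : EqOn f g U) (hf : HasDerivAt f f' x) (hg : HasDerivAt g g' x) :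
    f' = g' :=
  hf.unique (hg.congr_of_eventuallyEq (hfg.eventuallyEq_of_mem (hU.mem_nhds hx)))

section GammaQuotient

variable {s x : ℝ}

lemma hasDerivAt_digamma_sub_digamma_sub (hx : 0 < x) (hxs : x < s) :
    HasDerivAt (fun y => digamma y - digamma (s - y)) (trigamma x + trigamma (s - x)) x := by
  have h := (hasDerivAt_digamma (sub_pos.2 hxs)).comp x ((hasDerivAt_id x).const_sub s)
  exact ((hasDerivAt_digamma hx).sub h).congr_deriv (by simp)

lemma hasDerivAt_Gamma_mul_Gamma_sub_div (hx : 0 < x) (hxs : x < s) :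
    HasDerivAt (fun y => Real.Gamma y * Real.Gamma (s - y) / Real.Gamma s)
      (Real.Gamma x * Real.Gamma (s - x) / Real.Gamma s * (digamma x - digamma (s - x))) x := by
  have h := (hasDerivAt_Gamma_of_pos (sub_pos.2 hxs)).comp x ((hasDerivAt_id x).const_sub s)
  refine (((hasDerivAt_Gamma_of_pos hx).mul h).div_const _).congr_deriv ?_
  simp only [Function.comp_def]
  ring

lemma hasDerivAt_Gamma_mul_Gamma_sub_div_mul_digamma_sub (hx : 0 < x) (hxs : x < s) :
    HasDerivAt
      (fun y => Real.Gamma y * Real.Gamma (s - y) / Real.Gamma s * (digamma y - digamma (s - y)))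
      (Real.Gamma x * Real.Gamma (s - x) / Real.Gamma s *
        ((digamma x - digamma (s - x)) ^ 2 + trigamma x + trigamma (s - x))) x :=
  ((hasDerivAt_Gamma_mul_Gamma_sub_div hx hxs).mul
    (hasDerivAt_digamma_sub_digamma_sub hx hxs)).congr_deriv (by ring)

end GammaQuotient

section OneAddRpowNeg

variable {s x : ℝ}

lemma continuousOn_one_add_rpow_neg : ContinuousOn (fun t : ℝ => (1 + t) ^ (-s)) (Ioi 0) :=
  fun t (ht : 0 < t) => ((continuousAt_id.const_add 1).rpow_const
    (Or.inl (by simp only [id_eq]; linarith))).continuousWithinAt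

lemma continuousOn_log_mul_one_add_rpow_neg :
    ContinuousOn (fun t : ℝ => Real.log t * (1 + t) ^ (-s)) (Ioi 0) :=
  (Real.continuousOn_log.mono fun _ ht => ne_of_gt ht).mul continuousOn_one_add_rpow_neg

lemma one_add_rpow_neg_isBigO_atTop (hs : 0 ≤ s) :
    (fun t : ℝ => (1 + t) ^ (-s)) =O[atTop] (· ^ (-s)) := by
  refine IsBigO.of_bound 1 ?_
  filter_upwards [eventually_gt_atTop 0] with t ht
  rw [one_mul, Real.norm_of_nonneg (by positivity), Real.norm_of_nonneg (by positivity)]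
  exact Real.rpow_le_rpow_of_nonpos ht (by linarith) (by linarith)

lemma one_add_rpow_neg_isBigO_nhdsGT_zero (hs : 0 ≤ s) :
    (fun t : ℝ => (1 + t) ^ (-s)) =O[𝓝[>] 0] (· ^ (-(0 : ℝ))) := by
  refine IsBigO.of_bound 1 ?_
  filter_upwards [self_mem_nhdsWithin] with t (ht : 0 < t)
  rw [neg_zero, Real.rpow_zero, norm_one, one_mul, Real.norm_of_nonneg (by positivity)]
  exact Real.rpow_le_one_of_one_le_of_nonpos (by linarith) (by linarith)

lemma integral_rpow_mul_one_add_rpow_neg_eq_Gamma (hx : 0 < x) (hxs : x < s) :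
    ∫ t in Ioi (0 : ℝ), t ^ (x - 1) * (1 + t) ^ (-s)
      = Real.Gamma x * Real.Gamma (s - x) / Real.Gamma s := by
  have h := integral_rpow_mul_one_add_rpow_neg (a := x) (b := s - x)
  rwa [add_sub_cancel, Beta_eq_Gamma_mul_Gamma_div hx (sub_pos.2 hxs), add_sub_cancel] at h

lemma integral_rpow_mul_log_mul_one_add_rpow_neg (hx : 0 < x) (hxs : x < s) :
    ∫ t in Ioi (0 : ℝ), t ^ (x - 1) * (Real.log t * (1 + t) ^ (-s))
      = Real.Gamma x * Real.Gamma (s - x) / Real.Gamma s * (digamma x - digamma (s - x)) :=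
  (hasDerivAt_integral_rpow_mul continuousOn_one_add_rpow_neg
    (one_add_rpow_neg_isBigO_atTop (by linarith)) (one_add_rpow_neg_isBigO_nhdsGT_zero
      (by linarith)) hx hxs).unique_of_eqOn isOpen_Ioo ⟨hx, hxs⟩
    (fun y hy => integral_rpow_mul_one_add_rpow_neg_eq_Gamma hy.1 hy.2)
    (hasDerivAt_Gamma_mul_Gamma_sub_div hx hxs)

lemma integral_rpow_mul_log_mul_log_mul_one_add_rpow_neg (hx : 0 < x) (hxs : x < s) :
    ∫ t in Ioi (0 : ℝ), t ^ (x - 1) * (Real.log t * (Real.log t * (1 + t) ^ (-s)))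
      = Real.Gamma x * Real.Gamma (s - x) / Real.Gamma s *
        ((digamma x - digamma (s - x)) ^ 2 + trigamma x + trigamma (s - x)) :=
  -- the factor `log t` costs an arbitrarily small power of `t` at both ends
  (hasDerivAt_integral_rpow_mul continuousOn_log_mul_one_add_rpow_neg
    (isBigO_rpow_top_log_smul (b := (x + s) / 2) (by linarith)
      (one_add_rpow_neg_isBigO_atTop (by linarith)))
    (isBigO_rpow_zero_log_smul (b := x / 2) (by linarith)
      (one_add_rpow_neg_isBigO_nhdsGT_zero (by linarith)))
    (by linarith) (by linarith)).unique_of_eqOn isOpen_Ioo ⟨hx, hxs⟩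
    (fun y hy => integral_rpow_mul_log_mul_one_add_rpow_neg hy.1 hy.2)
    (hasDerivAt_Gamma_mul_Gamma_sub_div_mul_digamma_sub hx hxs)

end OneAddRpowNeg

theorem logsq_beta_integral (m s : ℝ) (hm : 0 < m + 1) (hs : 0 < s - m - 1) :
    (∫ t in Ioi (0:ℝ), (Real.log t) ^ 2 * t ^ m / (1 + t) ^ s)
      = Beta (s - m - 1) (m + 1) *
        ((digamma (m + 1) - digamma (s - m - 1)) ^ 2
          + trigamma (m + 1) + trigamma (s - m - 1)) := by
  calc (∫ t in Ioi (0:ℝ), (Real.log t) ^ 2 * t ^ m / (1 + t) ^ s)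
      = ∫ t in Ioi (0 : ℝ), t ^ (m + 1 - 1) * (Real.log t * (Real.log t * (1 + t) ^ (-s))) := by
        refine setIntegral_congr_fun measurableSet_Ioi fun t (ht : 0 < t) => ?_
        rw [add_sub_cancel_right, Real.rpow_neg (by linarith), ← div_eq_mul_inv]
        ring
    _ = _ := integral_rpow_mul_log_mul_log_mul_one_add_rpow_neg hm (by linarith)
    _ = _ := by
        rw [Beta_eq_Gamma_mul_Gamma_div hs hm, show s - m - 1 + (m + 1) = s by ring, sub_sub]
        ring
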